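/- Let Ṽ_{1/2} be the normalised Wolbachia operator with η = 1/2. For every initial point s = (x₁⁽⁰⁾,x₂⁽⁰⁾,x₃⁽⁰⁾,u⁽⁰⁾) ∈ S^{3,1}, the sequence Ṽ_{1/2}^k(s) converges as k → ∞. If x₃⁽⁰⁾ = 0, then Ṽ_{1/2}^k(s) = Ṽ_{1/2}(s) for all k ≥ 1, so the limit is Ṽ_{1/2}(s) = ( x₁⁽⁰⁾/(2(x₁⁽⁰⁾+x₂⁽⁰⁾)), x₂⁽⁰⁾/(2(x₁⁽⁰⁾+x₂⁽⁰⁾)), 0, 1/2 ). Otherwise, writing (x₁⁽¹⁾,x₂⁽¹⁾,x₃⁽¹⁾,u⁽¹⁾) = Ṽ_{1/2}(s), the limit is ( (x₁⁽¹⁾+x₃⁽¹⁾)/(1+4x₃⁽¹⁾), (1+2(x₃⁽¹⁾−x₁⁽¹⁾))/(2(1+4x₃⁽¹⁾)), 0, 1/2 ). -/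

import Mathlib

/-!
After one step of `Ṽ_{1/2}` every orbit lies on the plane `x₁ + x₂ = x₃ + u = 1/2`. On that plane
`(x₁ + x₃) / (1 + 4 x₃)` is invariant and the third coordinate evolves by itself under
`c ↦ c / (2 + 4 c) ≤ c / 2`, so it tends to `0` and the orbit converges to the point of the plane
with `x₃ = 0` and the same invariant. If `x₃ = 0` initially, the first iterate is already that point.
-/

/-- The normalised Wolbachia gonosomal operator with parameter `η`
(defined for points whose first three coordinates have positive sum). -/
noncomputable def nWolbOp (η : ℝ) (p : ℝ × ℝ × ℝ × ℝ) : ℝ × ℝ × ℝ × ℝ :=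
  (η * (2 * p.1 + p.2.2.1) / (2 * (p.1 + p.2.1 + p.2.2.1)),
   (p.2.1 + (1 - η) * p.2.2.1) / (2 * (p.1 + p.2.1 + p.2.2.1)),
   η * p.2.2.1 / (2 * (p.1 + p.2.1 + p.2.2.1)),
   ((1 - η) * (2 * p.1 + p.2.2.1) + p.2.1) / (2 * (p.1 + p.2.1 + p.2.2.1)))

/-- The set `S^{3,1}` of frequency distributions. -/
def S31 : Set (ℝ × ℝ × ℝ × ℝ) :=
  {p | 0 ≤ p.1 ∧ 0 ≤ p.2.1 ∧ 0 ≤ p.2.2.1 ∧ 0 ≤ p.2.2.2 ∧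
       0 < p.1 + p.2.1 + p.2.2.1 ∧ 0 < p.2.2.2 ∧
       p.1 + p.2.1 + p.2.2.1 + p.2.2.2 = 1}

open Filter Topology Set

theorem tendsto_iterate_nhds_zero_of_le_mul {g : ℝ → ℝ} {r : ℝ} (hr0 : 0 ≤ r) (hr : r < 1)
    (hg : MapsTo g (Ici 0) (Ici 0)) (hg_le : ∀ x, 0 ≤ x → g x ≤ r * x)
    {x : ℝ} (hx : 0 ≤ x) : Tendsto (fun k => g^[k] x) atTop (𝓝 0) := by
  have hnonneg : ∀ k, 0 ≤ g^[k] x := fun k => hg.iterate k hx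
  have hle : ∀ k, g^[k] x ≤ r ^ k * x := fun k => by
    induction k with
    | zero => simp
    | succ k ih =>
      rw [Function.iterate_succ_apply', pow_succ', mul_assoc]
      exact (hg_le _ (hnonneg k)).trans (mul_le_mul_of_nonneg_left ih hr0)
  have hgeom : Tendsto (fun k => r ^ k * x) atTop (𝓝 0) := by
    simpa using (tendsto_pow_atTop_nhds_zero_of_lt_one hr0 hr).mul_const x
  exact squeeze_zero hnonneg hle hgeom

namespace WolbachiaHalf

/-- The dynamics of the third coordinate on the plane `x₁ + x₂ = x₃ + u = 1/2`. -/
noncomputable def thirdStep (c : ℝ) : ℝ := c / (2 + 4 * c)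

@[simp]
lemma thirdStep_zero : thirdStep 0 = 0 := by
  simp [thirdStep]

lemma mapsTo_thirdStep : MapsTo thirdStep (Ici 0) (Ici 0) := fun c (hc : 0 ≤ c) =>
  show 0 ≤ c / (2 + 4 * c) from div_nonneg hc (by linarith)

lemma thirdStep_le {c : ℝ} (hc : 0 ≤ c) : thirdStep c ≤ 1 / 2 * c := by
  rw [thirdStep, div_le_iff₀ (by linarith)]
  nlinarith

lemma tendsto_iterate_thirdStep {c : ℝ} (hc : 0 ≤ c) :
    Tendsto (fun k => thirdStep^[k] c) atTop (𝓝 0) :=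
  tendsto_iterate_nhds_zero_of_le_mul (by norm_num) (by norm_num)
    mapsTo_thirdStep (fun _ => thirdStep_le) hc

noncomputable def planeInvariant (p : ℝ × ℝ × ℝ × ℝ) : ℝ := (p.1 + p.2.2.1) / (1 + 4 * p.2.2.1)

/-- The point of the plane `x₁ + x₂ = x₃ + u = 1/2` with invariant `f` and third coordinate `c`;
its first coordinate solves `(x₁ + c) / (1 + 4 c) = f`. -/
noncomputable def planePoint (f c : ℝ) : ℝ × ℝ × ℝ × ℝ :=
  (f + (4 * f - 1) * c, 1 / 2 - (f + (4 * f - 1) * c), c, 1 / 2 - c)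

lemma continuous_planePoint (f : ℝ) : Continuous (planePoint f) := by
  unfold planePoint; fun_prop

lemma eq_planePoint {p : ℝ × ℝ × ℝ × ℝ} (h₁₂ : p.1 + p.2.1 = 1 / 2)
    (h₃₄ : p.2.2.1 + p.2.2.2 = 1 / 2) (hc : 1 + 4 * p.2.2.1 ≠ 0) :
    p = planePoint (planeInvariant p) p.2.2.1 := by
  obtain ⟨a, b, c, u⟩ := p
  simp only [planePoint, planeInvariant, Prod.mk.injEq, true_and] at *
  have hf : (a + c) / (1 + 4 * c) * (1 + 4 * c) = a + c := div_mul_cancel₀ _ hc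
  refine ⟨?_, ?_, ?_⟩
  · linear_combination -hf
  · linear_combination h₁₂ + hf
  · linear_combination h₃₄

lemma nWolbOp_half_planePoint (f : ℝ) {c : ℝ} (hc : 0 ≤ c) :
    nWolbOp (1 / 2) (planePoint f c) = planePoint f (thirdStep c) := by
  have hsum : 2 * ((f + (4 * f - 1) * c) + (1 / 2 - (f + (4 * f - 1) * c)) + c) = 1 + 2 * c := by
    ring
  have hc₁ : (1 : ℝ) + 2 * c ≠ 0 := by linarith
  simp only [nWolbOp, planePoint, thirdStep, Prod.mk.injEq, hsum]
  refine ⟨?_, ?_, ?_, ?_⟩ <;> rw [div_eq_iff hc₁] <;> field_simp <;> ring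

lemma iterate_nWolbOp_half_planePoint (f : ℝ) {c : ℝ} (hc : 0 ≤ c) (k : ℕ) :
    (nWolbOp (1 / 2))^[k] (planePoint f c) = planePoint f (thirdStep^[k] c) := by
  induction k with
  | zero => rfl
  | succ k ih =>
    rw [Function.iterate_succ_apply', ih, Function.iterate_succ_apply',
      nWolbOp_half_planePoint f (mapsTo_thirdStep.iterate k hc)]

lemma nWolbOp_half_fst_add_snd {s : ℝ × ℝ × ℝ × ℝ} (hα : s.1 + s.2.1 + s.2.2.1 ≠ 0) :
    (nWolbOp (1 / 2) s).1 + (nWolbOp (1 / 2) s).2.1 = 1 / 2 := by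
  simp only [nWolbOp]
  field_simp
  ring

lemma nWolbOp_half_third_add_fourth {s : ℝ × ℝ × ℝ × ℝ} (hα : s.1 + s.2.1 + s.2.2.1 ≠ 0) :
    (nWolbOp (1 / 2) s).2.2.1 + (nWolbOp (1 / 2) s).2.2.2 = 1 / 2 := by
  simp only [nWolbOp]
  field_simp
  ring

lemma nWolbOp_half_of_third_eq_zero {s : ℝ × ℝ × ℝ × ℝ} (hα : s.1 + s.2.1 + s.2.2.1 ≠ 0)
    (h₃ : s.2.2.1 = 0) :
    nWolbOp (1 / 2) s =
      (s.1 / (2 * (s.1 + s.2.1)), s.2.1 / (2 * (s.1 + s.2.1)), (0 : ℝ), (1 : ℝ) / 2) := by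
  rw [h₃, add_zero] at hα
  simp only [nWolbOp, h₃, Prod.mk.injEq, add_zero, mul_zero, zero_div]
  refine ⟨?_, trivial, trivial, ?_⟩
  · field_simp
  · rw [div_eq_iff (mul_ne_zero two_ne_zero hα)]
    ring

lemma nWolbOp_half_third_nonneg {s : ℝ × ℝ × ℝ × ℝ} (hα : 0 < s.1 + s.2.1 + s.2.2.1)
    (h₃ : 0 ≤ s.2.2.1) : 0 ≤ (nWolbOp (1 / 2) s).2.2.1 := by
  simp only [nWolbOp]
  positivity

lemma nWolbOp_half_eq_planePoint {s : ℝ × ℝ × ℝ × ℝ} (hα : 0 < s.1 + s.2.1 + s.2.2.1)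
    (h₃ : 0 ≤ s.2.2.1) :
    nWolbOp (1 / 2) s =
      planePoint (planeInvariant (nWolbOp (1 / 2) s)) (nWolbOp (1 / 2) s).2.2.1 :=
  eq_planePoint (nWolbOp_half_fst_add_snd hα.ne') (nWolbOp_half_third_add_fourth hα.ne')
    (by linarith [nWolbOp_half_third_nonneg hα h₃])

lemma planePoint_planeInvariant_zero {p : ℝ × ℝ × ℝ × ℝ} (hc : 1 + 4 * p.2.2.1 ≠ 0) :
    planePoint (planeInvariant p) 0 =
      ((p.1 + p.2.2.1) / (1 + 4 * p.2.2.1),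
       (1 + 2 * (p.2.2.1 - p.1)) / (2 * (1 + 4 * p.2.2.1)), 0, 1 / 2) := by
  obtain ⟨a, b, c, u⟩ := p
  simp only [planePoint, planeInvariant, mul_zero, add_zero, sub_zero, Prod.mk.injEq] at *
  refine ⟨trivial, ?_, trivial⟩
  rw [div_sub_div _ _ two_ne_zero hc,
    div_eq_div_iff (mul_ne_zero two_ne_zero hc) (mul_ne_zero two_ne_zero hc)]
  ring

theorem tendsto_iterate_nWolbOp_half {s : ℝ × ℝ × ℝ × ℝ} (hα : 0 < s.1 + s.2.1 + s.2.2.1)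
    (h₃ : 0 ≤ s.2.2.1) :
    Tendsto (fun k => (nWolbOp (1 / 2))^[k] s) atTop
      (𝓝 (planePoint (planeInvariant (nWolbOp (1 / 2) s)) 0)) := by
  have hc := nWolbOp_half_third_nonneg hα h₃
  have hq := nWolbOp_half_eq_planePoint hα h₃
  set f := planeInvariant (nWolbOp (1 / 2) s)
  set c := (nWolbOp (1 / 2) s).2.2.1
  have horbit : ∀ k, (nWolbOp (1 / 2))^[k + 1] s = planePoint f (thirdStep^[k] c) := fun k => by
    rw [Function.iterate_succ_apply, hq, iterate_nWolbOp_half_planePoint f hc]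
  rw [← tendsto_add_atTop_iff_nat 1]
  exact ((continuous_planePoint f).tendsto 0).comp (tendsto_iterate_thirdStep hc)
    |>.congr fun k => (horbit k).symm

end WolbachiaHalf

open WolbachiaHalf in
theorem nWolbOp_half_limit (s : ℝ × ℝ × ℝ × ℝ) (hs : s ∈ S31) :
    (s.2.2.1 = 0 →
      (∀ k : ℕ, 1 ≤ k → (nWolbOp (1 / 2))^[k] s = nWolbOp (1 / 2) s) ∧
      nWolbOp (1 / 2) s =
        (s.1 / (2 * (s.1 + s.2.1)), s.2.1 / (2 * (s.1 + s.2.1)), (0 : ℝ), (1 : ℝ) / 2) ∧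
      Filter.Tendsto (fun k => (nWolbOp (1 / 2))^[k] s) Filter.atTop
        (nhds (nWolbOp (1 / 2) s))) ∧
    (s.2.2.1 ≠ 0 →
      Filter.Tendsto (fun k => (nWolbOp (1 / 2))^[k] s) Filter.atTop
        (nhds
          (((nWolbOp (1 / 2) s).1 + (nWolbOp (1 / 2) s).2.2.1) /
              (1 + 4 * (nWolbOp (1 / 2) s).2.2.1),
           (1 + 2 * ((nWolbOp (1 / 2) s).2.2.1 - (nWolbOp (1 / 2) s).1)) /
              (2 * (1 + 4 * (nWolbOp (1 / 2) s).2.2.1)),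
           (0 : ℝ), (1 : ℝ) / 2))) := by
  obtain ⟨-, -, h₃, -, hα, -, -⟩ := hs
  have hconv := tendsto_iterate_nWolbOp_half hα h₃
  refine ⟨fun h₃_zero => ?_, fun _ => ?_⟩
  · have hq := nWolbOp_half_eq_planePoint hα h₃
    set f := planeInvariant (nWolbOp (1 / 2) s)
    rw [show (nWolbOp (1 / 2) s).2.2.1 = 0 by simp [nWolbOp, h₃_zero]] at hq
    have hfixed : nWolbOp (1 / 2) (nWolbOp (1 / 2) s) = nWolbOp (1 / 2) s := by
      rw [hq, nWolbOp_half_planePoint f le_rfl, thirdStep_zero]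
    have hconst : ∀ k, 1 ≤ k → (nWolbOp (1 / 2))^[k] s = nWolbOp (1 / 2) s := by
      intro k hk
      obtain ⟨m, rfl⟩ := Nat.exists_eq_add_of_le' hk
      rw [Function.iterate_succ_apply, Function.iterate_fixed hfixed]
    rw [← hq] at hconv
    exact ⟨hconst, nWolbOp_half_of_third_eq_zero hα.ne' h₃_zero, hconv⟩
  · rwa [planePoint_planeInvariant_zero (by linarith [nWolbOp_half_third_nonneg hα h₃])] at hconv
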